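/- Assume the multigraph is connected. Let C1, C2, C3 be (λ_S+1) cuts and let W be a (λ_S+1) class such that each of the three sets V_a, V_b, V_c contains a Steiner vertex and also contains a vertex of W. Then C1 ∩ C2 ∩ C3 = ∅. -/
import Mathlib


open Finset

namespace Paper

variable {α : Type*} [Fintype α] [DecidableEq α]

/-- Capacity of a cut `A` in an undirected multigraph with edge multiplicities `w`. -/
def cutCap (w : α → α → ℕ) (A : Finset α) : ℕ := ∑ u ∈ A, ∑ v ∈ Aᶜ, w u v

/-- `C` is a Steiner cut for the Steiner set `S`. -/
def IsSteinerCut (S C : Finset α) : Prop := (C ∩ S).Nonempty ∧ (S \ C).Nonempty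

/-- `C` is an `S`-mincut: a Steiner cut of capacity `lam = λ_S`. -/
def IsSMincut (w : α → α → ℕ) (S : Finset α) (lam : ℕ) (C : Finset α) : Prop :=
  IsSteinerCut S C ∧ cutCap w C = lam

/-- `C` is a `(λ_S+1)` cut: a Steiner cut of capacity `lam + 1`. -/
def IsPlusOneCut (w : α → α → ℕ) (S : Finset α) (lam : ℕ) (C : Finset α) : Prop :=
  IsSteinerCut S C ∧ cutCap w C = lam + 1

/-- A cut `C` separates `u` and `v`: exactly one of them lies in `C`. -/
def Separates (C : Finset α) (u v : α) : Prop := (u ∈ C ∧ v ∉ C) ∨ (v ∈ C ∧ u ∉ C)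

/-- `W` is a `(λ_S+1)` class: an equivalence class of the relation relating `u,v`
iff no `S`-mincut separates them. -/
def IsClass (w : α → α → ℕ) (S : Finset α) (lam : ℕ) (W : Finset α) : Prop :=
  ∃ u0 : α, ∀ v : α, v ∈ W ↔ ∀ C : Finset α, IsSMincut w S lam C → ¬ Separates C u0 v

/-- `C` is a nearest `(λ_S+1)` cut of `u` containing the Steiner vertex `s`. -/
def IsNearestPlusOneCut (w : α → α → ℕ) (S : Finset α) (lam : ℕ) (s u : α)
    (C : Finset α) : Prop :=
  IsPlusOneCut w S lam C ∧ s ∈ C ∧ u ∈ C ∧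
    ∀ C' : Finset α, IsPlusOneCut w S lam C' → s ∈ C' → u ∈ C' → ¬ C' ⊂ C

/-- A cut `C` subdivides a set `X`. -/
def Subdivides (C X : Finset α) : Prop := (X ∩ C).Nonempty ∧ (X \ C).Nonempty

/-- `cutCap` as a full double sum with indicator conditions. -/
lemma cutCap_eq (w : α → α → ℕ) (A : Finset α) :
    cutCap w A = ∑ u, ∑ v, if u ∈ A ∧ v ∉ A then w u v else 0 := by
  unfold cutCap
  calc ∑ u ∈ A, ∑ v ∈ Aᶜ, w u v
      = ∑ u, if u ∈ A then ∑ v, if v ∉ A then w u v else 0 else 0 := by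
        rw [Finset.sum_ite_mem, Finset.univ_inter]
        refine Finset.sum_congr rfl fun u _ => ?_
        simp only [← Finset.mem_compl (s := A)]
        rw [Finset.sum_ite_mem, Finset.univ_inter]
    _ = ∑ u, ∑ v, if u ∈ A ∧ v ∉ A then w u v else 0 := by
        refine Finset.sum_congr rfl fun u _ => ?_
        by_cases h : u ∈ A <;> simp [h]

/-- The reversed form, using symmetry of `w`. -/
lemma cutCap_eq_rev (w : α → α → ℕ) (hsym : ∀ u v, w u v = w v u) (A : Finset α) :
    cutCap w A = ∑ u, ∑ v, if v ∈ A ∧ u ∉ A then w u v else 0 := by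
  rw [cutCap_eq, Finset.sum_comm]
  exact Finset.sum_congr rfl fun u _ => Finset.sum_congr rfl fun v _ => by
    rw [hsym]

/-- Counting inequality: the three private corner regions plus the triple
intersection have total capacity at most the total capacity of the three cuts. -/
lemma count_ineq (w : α → α → ℕ) (hsym : ∀ u v, w u v = w v u) (C1 C2 C3 : Finset α) :
    cutCap w (C1 ∩ C2ᶜ ∩ C3ᶜ) + cutCap w (C1ᶜ ∩ C2 ∩ C3ᶜ) + cutCap w (C1ᶜ ∩ C2ᶜ ∩ C3)
      + cutCap w (C1 ∩ C2 ∩ C3)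
    ≤ cutCap w C1 + cutCap w C2 + cutCap w C3 := by
  refine Nat.le_of_mul_le_mul_left ?_ (show 0 < 2 by norm_num)
  have e : ∀ A : Finset α, 2 * cutCap w A =
      ∑ u, ∑ v, ((if u ∈ A ∧ v ∉ A then w u v else 0)
        + (if v ∈ A ∧ u ∉ A then w u v else 0)) := by
    intro A
    rw [two_mul]
    nth_rewrite 2 [cutCap_eq_rev w hsym A]
    rw [cutCap_eq w A]
    rw [← Finset.sum_add_distrib]
    exact Finset.sum_congr rfl fun u _ => (Finset.sum_add_distrib).symm
  rw [Nat.mul_add, Nat.mul_add, Nat.mul_add, Nat.mul_add, Nat.mul_add,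
    e, e, e, e, e, e, e]
  simp only [← Finset.sum_add_distrib]
  refine Finset.sum_le_sum fun u _ => Finset.sum_le_sum fun v _ => ?_
  simp only [Finset.mem_inter, Finset.mem_compl]
  by_cases p1 : u ∈ C1 <;> by_cases p2 : u ∈ C2 <;> by_cases p3 : u ∈ C3 <;>
    by_cases q1 : v ∈ C1 <;> by_cases q2 : v ∈ C2 <;> by_cases q3 : v ∈ C3 <;>
    simp [p1, p2, p3, q1, q2, q3]

/-- A Steiner cut containing a vertex of a `(λ_S+1)` class and missing another
vertex of it has capacity at least `lam + 1`. -/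
lemma class_cut_lower (w : α → α → ℕ) (S : Finset α) (lam : ℕ)
    (hlam_min : ∀ C : Finset α, IsSteinerCut S C → lam ≤ cutCap w C)
    (u0 : α) (W : Finset α)
    (hu0 : ∀ v : α, v ∈ W ↔ ∀ C : Finset α, IsSMincut w S lam C → ¬ Separates C u0 v)
    (A : Finset α) (a wa b wb : α) (haA : a ∈ A) (haS : a ∈ S)
    (hwaA : wa ∈ A) (hwaW : wa ∈ W)
    (hbA : b ∉ A) (hbS : b ∈ S) (hwbA : wb ∉ A) (hwbW : wb ∈ W) :
    lam + 1 ≤ cutCap w A := by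
  have hsc : IsSteinerCut S A :=
    ⟨⟨a, Finset.mem_inter.mpr ⟨haA, haS⟩⟩, ⟨b, Finset.mem_sdiff.mpr ⟨hbS, hbA⟩⟩⟩
  rcases eq_or_lt_of_le (hlam_min A hsc) with heq | hlt
  · exfalso
    have hmin : IsSMincut w S lam A := ⟨hsc, heq.symm⟩
    by_cases h0 : u0 ∈ A
    · exact (hu0 wb).mp hwbW A hmin (Or.inl ⟨h0, hwbA⟩)
    · exact (hu0 wa).mp hwaW A hmin (Or.inr ⟨hwaA, h0⟩)
  · exact hlt

/-- Corollary of the Gen-3-Star Lemma for connected multigraphs. -/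
theorem gen_three_star_corollary
    (w : α → α → ℕ) (hsym : ∀ u v, w u v = w v u) (hdiag : ∀ u, w u u = 0)
    (hconn : ∀ A : Finset α, A.Nonempty → A ≠ Finset.univ → 1 ≤ cutCap w A)
    (S : Finset α) (hScard : 2 ≤ S.card) (lam : ℕ)
    (hlam_ex : ∃ C : Finset α, IsSteinerCut S C ∧ cutCap w C = lam)
    (hlam_min : ∀ C : Finset α, IsSteinerCut S C → lam ≤ cutCap w C)
    (C1 C2 C3 : Finset α)
    (h1 : IsPlusOneCut w S lam C1) (h2 : IsPlusOneCut w S lam C2)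
    (h3 : IsPlusOneCut w S lam C3)
    (W : Finset α) (hW : IsClass w S lam W)
    (haS : ((C1 ∩ C2ᶜ ∩ C3ᶜ) ∩ S).Nonempty) (haW : ((C1 ∩ C2ᶜ ∩ C3ᶜ) ∩ W).Nonempty)
    (hbS : ((C1ᶜ ∩ C2 ∩ C3ᶜ) ∩ S).Nonempty) (hbW : ((C1ᶜ ∩ C2 ∩ C3ᶜ) ∩ W).Nonempty)
    (hcS : ((C1ᶜ ∩ C2ᶜ ∩ C3) ∩ S).Nonempty) (hcW : ((C1ᶜ ∩ C2ᶜ ∩ C3) ∩ W).Nonempty) :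
    C1 ∩ C2 ∩ C3 = ∅ := by
  obtain ⟨u0, hu0⟩ := hW
  obtain ⟨a, ha⟩ := haS
  obtain ⟨wa, hwa⟩ := haW
  obtain ⟨b, hb⟩ := hbS
  obtain ⟨wb, hwb⟩ := hbW
  obtain ⟨c, hc⟩ := hcS
  obtain ⟨wc, hwc⟩ := hcW
  simp only [Finset.mem_inter, Finset.mem_compl] at ha hwa hb hwb hc hwc
  obtain ⟨⟨⟨ha1, ha2⟩, ha3⟩, haS'⟩ := ha
  obtain ⟨⟨⟨hwa1, hwa2⟩, hwa3⟩, hwaW⟩ := hwa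
  obtain ⟨⟨⟨hb1, hb2⟩, hb3⟩, hbS'⟩ := hb
  obtain ⟨⟨⟨hwb1, hwb2⟩, hwb3⟩, hwbW⟩ := hwb
  obtain ⟨⟨⟨hc1, hc2⟩, hc3⟩, hcS'⟩ := hc
  obtain ⟨⟨⟨hwc1, hwc2⟩, hwc3⟩, hwcW⟩ := hwc
  have hVa : lam + 1 ≤ cutCap w (C1 ∩ C2ᶜ ∩ C3ᶜ) := by
    refine class_cut_lower w S lam hlam_min u0 W hu0 _ a wa b wb ?_ haS' ?_ hwaW ?_ hbS' ?_ hwbW <;>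
      simp_all [Finset.mem_inter, Finset.mem_compl]
  have hVb : lam + 1 ≤ cutCap w (C1ᶜ ∩ C2 ∩ C3ᶜ) := by
    refine class_cut_lower w S lam hlam_min u0 W hu0 _ b wb a wa ?_ hbS' ?_ hwbW ?_ haS' ?_ hwaW <;>
      simp_all [Finset.mem_inter, Finset.mem_compl]
  have hVc : lam + 1 ≤ cutCap w (C1ᶜ ∩ C2ᶜ ∩ C3) := by
    refine class_cut_lower w S lam hlam_min u0 W hu0 _ c wc a wa ?_ hcS' ?_ hwcW ?_ haS' ?_ hwaW <;>
      simp_all [Finset.mem_inter, Finset.mem_compl]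
  have hineq := count_ineq w hsym C1 C2 C3
  rw [h1.2, h2.2, h3.2] at hineq
  have hZ0 : cutCap w (C1 ∩ C2 ∩ C3) = 0 := by omega
  rcases Finset.eq_empty_or_nonempty (C1 ∩ C2 ∩ C3) with he | hne
  · exact he
  · exfalso
    have hneq : C1 ∩ C2 ∩ C3 ≠ Finset.univ := by
      intro h
      have : b ∈ C1 ∩ C2 ∩ C3 := h ▸ Finset.mem_univ b
      simp only [Finset.mem_inter] at this
      exact hb1 this.1.1
    have := hconn _ hne hneq
    omega


end Paper
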